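/- arXiv:2509.14964 — 3 statements merged into one kernel-verified Lean document; each statement's English description precedes it below -/
import Mathlib

section
/- An Apollonian network with n vertices contains exactly 3n - 8 triangles (cycles of length three). -/
/-!
Subdividing a face adds one vertex and exactly three triangles: a triangle through the new
apex `v` is `v` together with two of its three neighbours, and a triangle avoiding `v` is
already a triangle of the old graph. Since `K4` has four vertices and four triangles, the
quantity `3 n - #triangles` stays equal to `8`.
-/

open SimpleGraph

/-- The complete graph `K4` on the vertices `{0,1,2,3}` of `ℕ`. -/
def K4n : SimpleGraph ℕ where
  Adj x y := x ≠ y ∧ x < 4 ∧ y < 4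
  symm := ⟨fun _ _ h => ⟨h.1.symm, h.2.2, h.2.1⟩⟩
  loopless := ⟨fun _ h => h.1 rfl⟩

/-- Add a new apex vertex `v` joined to the three vertices `a`, `b`, `c`. -/
def addApex (G : SimpleGraph ℕ) (v a b c : ℕ) : SimpleGraph ℕ :=
  G ⊔ SimpleGraph.fromEdgeSet {s(v, a), s(v, b), s(v, c)}

/-- `ApollonianF G Fs` : `G` is an Apollonian network with set of (triangular) faces `Fs`,
built from `K4` by recursively subdividing a triangular face. -/
inductive ApollonianF : SimpleGraph ℕ → Set (Finset ℕ) → Prop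
  | base : ApollonianF K4n {{0, 1, 2}, {0, 1, 3}, {0, 2, 3}, {1, 2, 3}}
  | subdivide (G : SimpleGraph ℕ) (Fs : Set (Finset ℕ)) (a b c v : ℕ) :
      ApollonianF G Fs → ({a, b, c} : Finset ℕ) ∈ Fs →
      (∀ y, ¬ G.Adj v y) →
      ApollonianF (addApex G v a b c)
        ((Fs \ {({a, b, c} : Finset ℕ)}) ∪ {{v, a, b}, {v, a, c}, {v, b, c}})

/-- A graph (on vertex set its support) is an Apollonian network. -/
def IsApollonian (G : SimpleGraph ℕ) : Prop := ∃ Fs, ApollonianF G Fs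

/-- The triangles (sets of three pairwise adjacent vertices) of `G`. -/
def triangleSet (G : SimpleGraph ℕ) : Set (Finset ℕ) :=
  {t | ∃ a b c : ℕ, t = {a, b, c} ∧ G.Adj a b ∧ G.Adj a c ∧ G.Adj b c}

/-- A triangle is separating if deleting its vertices disconnects the graph. -/
def IsSeparatingTriangle (G : SimpleGraph ℕ) (t : Finset ℕ) : Prop :=
  t ∈ triangleSet G ∧ ¬ (G.induce (G.support \ ↑t)).Connected

/-- `G` is (isomorphic to) the complete graph on four vertices. -/
def IsK4Graph (G : SimpleGraph ℕ) : Prop :=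
  ∃ s : Finset ℕ, ↑s = G.support ∧ s.card = 4 ∧ ∀ a ∈ s, ∀ b ∈ s, a ≠ b → G.Adj a b

/-- Delete the vertex `v` (and all incident edges). -/
def deleteVertex (G : SimpleGraph ℕ) (v : ℕ) : SimpleGraph ℕ where
  Adj x y := G.Adj x y ∧ x ≠ v ∧ y ≠ v
  symm := ⟨fun _ _ h => ⟨h.1.symm, h.2.2, h.2.1⟩⟩
  loopless := ⟨fun x h => G.loopless.1 x h.1⟩

open Finset

namespace SimpleGraph

variable {V : Type*} {G : SimpleGraph V} {n : ℕ} {s : Finset V} {x : V}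

lemma IsNClique.mem_support (hs : G.IsNClique n s) (hn : 1 < n) (hx : x ∈ s) :
    x ∈ G.support := by
  obtain ⟨y, hy, hyx⟩ := exists_mem_ne (hs.card_eq ▸ hn) x
  exact ⟨y, hs.isClique hx hy hyx.symm⟩

lemma notMem_support_of_forall_not_adj (hx : ∀ y, ¬ G.Adj x y) : x ∉ G.support :=
  fun ⟨y, hy⟩ => hx y hy

lemma finite_cliqueSet (hn : 1 < n) (h : G.support.Finite) : (G.cliqueSet n).Finite :=
  (h.finite_subsets.preimage coe_injective.injOn).subset
    fun _ hs _ hx => IsNClique.mem_support hs hn hx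

end SimpleGraph

lemma triangleSet_eq_cliqueSet (G : SimpleGraph ℕ) : triangleSet G = G.cliqueSet 3 := by
  ext t
  simp only [triangleSet, Set.mem_ofPred_eq, mem_cliqueSet_iff, is3Clique_iff]
  constructor
  · rintro ⟨a, b, c, rfl, hab, hac, hbc⟩
    exact ⟨a, b, c, hab, hac, hbc, rfl⟩
  · rintro ⟨a, b, c, hab, hac, hbc, rfl⟩
    exact ⟨a, b, c, rfl, hab, hac, hbc⟩

lemma K4n_support : K4n.support = ↑(range 4) := by
  ext x
  simp only [mem_support, coe_range, Set.mem_Iio]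
  refine ⟨fun ⟨_, h⟩ => h.2.1, fun hx => ?_⟩
  by_cases hx0 : x = 0
  · exact ⟨1, by omega, hx, by omega⟩
  · exact ⟨0, hx0, hx, by omega⟩

lemma cliqueSet_K4n (hn : 1 < n) : K4n.cliqueSet n = ↑((range 4).powersetCard n) := by
  ext s
  simp only [mem_cliqueSet_iff, mem_coe, mem_powersetCard]
  refine ⟨fun hs => ⟨fun x hx => ?_, hs.card_eq⟩, fun ⟨hs, hcard⟩ => ⟨?_, hcard⟩⟩
  · have := hs.mem_support hn hx
    rwa [K4n_support, mem_coe] at this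
  · intro x hx y hy hxy
    exact ⟨hxy, mem_range.1 (hs hx), mem_range.1 (hs hy)⟩

section addApex

variable {G : SimpleGraph ℕ} {v a b c : ℕ}

lemma le_addApex : G ≤ addApex G v a b c := le_sup_left

lemma addApex_adj_of_ne {x y : ℕ} (hx : x ≠ v) (hy : y ≠ v) :
    (addApex G v a b c).Adj x y ↔ G.Adj x y := by
  simp [addApex, hx, hy]

lemma apex_notMem_face (hv : ∀ y, ¬ G.Adj v y) (habc : G.IsNClique 3 {a, b, c}) :
    v ∉ ({a, b, c} : Finset ℕ) :=
  fun h => notMem_support_of_forall_not_adj hv (habc.mem_support (by norm_num) h)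

lemma addApex_adj_apex (hv : ∀ y, ¬ G.Adj v y) (habc : G.IsNClique 3 {a, b, c}) {y : ℕ} :
    (addApex G v a b c).Adj v y ↔ y ∈ ({a, b, c} : Finset ℕ) := by
  have := apex_notMem_face hv habc
  simp only [mem_insert, mem_singleton, not_or] at this
  simp only [addApex, sup_adj, hv, fromEdgeSet_adj, Set.mem_insert_iff, Set.mem_singleton_iff,
    Sym2.congr_right, mem_insert, mem_singleton, false_or]
  grind

lemma support_addApex (hv : ∀ y, ¬ G.Adj v y) (habc : G.IsNClique 3 {a, b, c}) :
    (addApex G v a b c).support = insert v G.support := by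
  refine subset_antisymm (fun x hx => ?_) (Set.insert_subset ?_ (support_mono le_addApex))
  · obtain ⟨y, hxy⟩ := hx
    by_cases hx : x = v
    · exact Or.inl hx
    by_cases hy : y = v
    · subst hy
      exact Or.inr (habc.mem_support (by norm_num) ((addApex_adj_apex hv habc).1 hxy.symm))
    · exact Or.inr ⟨y, (addApex_adj_of_ne hx hy).1 hxy⟩
  · exact ⟨a, (addApex_adj_apex hv habc).2 (by simp)⟩

lemma cliqueSet_three_addApex (hv : ∀ y, ¬ G.Adj v y) (habc : G.IsNClique 3 {a, b, c}) :
    (addApex G v a b c).cliqueSet 3 =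
      G.cliqueSet 3 ∪ ↑((({a, b, c} : Finset ℕ).powersetCard 2).image (insert v)) := by
  ext t
  simp only [Set.mem_union, mem_cliqueSet_iff, mem_coe, mem_image, mem_powersetCard]
  constructor
  · intro ht
    by_cases hvt : v ∈ t
    · refine Or.inr ⟨t.erase v, ⟨fun w hw => ?_, by rw [card_erase_of_mem hvt, ht.card_eq]⟩,
        insert_erase hvt⟩
      obtain ⟨hwv, hwt⟩ := mem_erase.1 hw
      exact (addApex_adj_apex hv habc).1 (ht.isClique hvt hwt hwv.symm)
    · refine Or.inl ⟨fun x hx y hy hxy => ?_, ht.card_eq⟩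
      exact (addApex_adj_of_ne (ne_of_mem_of_not_mem hx hvt) (ne_of_mem_of_not_mem hy hvt)).1
        (ht.isClique hx hy hxy)
  · rintro (ht | ⟨s, ⟨hs, hcard⟩, rfl⟩)
    · exact ht.mono le_addApex
    · have hsG : G.IsNClique 2 s := ⟨habc.isClique.subset (by exact_mod_cast hs), hcard⟩
      exact (hsG.mono le_addApex).insert fun w hw => (addApex_adj_apex hv habc).2 (hs hw)

lemma ncard_cliqueSet_three_addApex (hv : ∀ y, ¬ G.Adj v y) (habc : G.IsNClique 3 {a, b, c})
    (hfin : (G.cliqueSet 3).Finite) :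
    ((addApex G v a b c).cliqueSet 3).ncard = (G.cliqueSet 3).ncard + 3 := by
  have hvs : ∀ s ∈ ({a, b, c} : Finset ℕ).powersetCard 2, v ∉ s :=
    fun s hs hvs => apex_notMem_face hv habc ((mem_powersetCard.1 hs).1 hvs)
  have hdisj : Disjoint (G.cliqueSet 3)
      ↑((({a, b, c} : Finset ℕ).powersetCard 2).image (insert v)) := by
    refine Set.disjoint_left.2 fun t ht ht' => ?_
    obtain ⟨s, -, rfl⟩ := mem_image.1 ht'
    exact notMem_support_of_forall_not_adj hv (ht.mem_support (by norm_num) (mem_insert_self v s))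
  have hinj : Set.InjOn (insert v) (({a, b, c} : Finset ℕ).powersetCard 2 : Set (Finset ℕ)) :=
    fun s hs s' hs' h => by
      rw [← erase_insert (hvs s hs), h, erase_insert (hvs s' hs')]
  rw [cliqueSet_three_addApex hv habc, Set.ncard_union_eq hdisj hfin, Set.ncard_coe_finset,
    card_image_of_injOn hinj, card_powersetCard, habc.card_eq]
  rfl

end addApex

namespace ApollonianF

variable {G : SimpleGraph ℕ} {Fs : Set (Finset ℕ)}

lemma isNClique_of_mem (h : ApollonianF G Fs) : ∀ t ∈ Fs, G.IsNClique 3 t := by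
  induction h with
  | base =>
    rintro t ht
    rw [← mem_cliqueSet_iff, cliqueSet_K4n (by norm_num)]
    simp only [Set.mem_insert_iff, Set.mem_singleton_iff] at ht
    rcases ht with rfl | rfl | rfl | rfl <;> decide
  | subdivide G Fs a b c v _ hmem hv ih =>
    have habc := ih _ hmem
    obtain ⟨hab, hac, hbc⟩ := is3Clique_triple_iff.1 habc
    have hapex : ∀ {y}, y ∈ ({a, b, c} : Finset ℕ) → (addApex G v a b c).Adj v y :=
      (addApex_adj_apex hv habc).2
    rintro t (⟨ht, -⟩ | ht)
    · exact (ih t ht).mono le_addApex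
    simp only [Set.mem_insert_iff, Set.mem_singleton_iff] at ht
    rcases ht with rfl | rfl | rfl <;> refine is3Clique_triple_iff.2 ⟨?_, ?_, ?_⟩ <;>
      first | exact hapex (by simp) | exact le_addApex ‹_›

lemma finite_support (h : ApollonianF G Fs) : G.support.Finite := by
  induction h with
  | base => rw [K4n_support]; exact finite_toSet _
  | subdivide G Fs a b c v hA hmem hv ih =>
    rw [support_addApex hv (hA.isNClique_of_mem _ hmem)]
    exact ih.insert v

lemma ncard_cliqueSet_three_add_eight (h : ApollonianF G Fs) :
    (G.cliqueSet 3).ncard + 8 = 3 * G.support.ncard := by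
  induction h with
  | base =>
    rw [cliqueSet_K4n (by norm_num), K4n_support, Set.ncard_coe_finset, Set.ncard_coe_finset,
      card_powersetCard, card_range]
    rfl
  | subdivide G Fs a b c v hA hmem hv ih =>
    have habc := hA.isNClique_of_mem _ hmem
    rw [ncard_cliqueSet_three_addApex hv habc (finite_cliqueSet (by norm_num) hA.finite_support),
      support_addApex hv habc,
      Set.ncard_insert_of_notMem (notMem_support_of_forall_not_adj hv) hA.finite_support]
    omega

end ApollonianF

/-- An Apollonian network with `n` vertices contains exactly `3n - 8`
triangles. -/
theorem stmt_0 (G : SimpleGraph ℕ) (hG : IsApollonian G) (n : ℕ)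
    (hn : G.support.ncard = n) :
    (triangleSet G).ncard = 3 * n - 8 := by
  obtain ⟨Fs, hA⟩ := hG
  have := hA.ncard_cliqueSet_three_add_eight
  rw [triangleSet_eq_cliqueSet, ← hn]
  omega
end

section
/- For every natural number n ≥ 4, the planar triangulation T_n constructed below on 2n + 5 vertices has trivial automorphism group. -/
/-! An automorphism preserves degrees. For `n ≥ 4` the vertices `v_1, v_2, v_3` and the two hubs
are the only vertices of degrees `6, 7, 5, 2n+2, 2n`, so they are fixed. Then `w_3` and `w_2` are
fixed as the only neighbours of degree three of `v_3` and `v_1`, and `w_1` as the only neighbour of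
`w_2` besides `v_1, v_2`. Finally, walking along the cycle from `v_2`, `v_{k+1}` is the only
neighbour of `v_k` not already known to be fixed. -/

open SimpleGraph

def IsCubicN (G : SimpleGraph ℕ) : Prop :=
  ∀ v ∈ G.support, (G.neighborSet v).ncard = 3

def CyclicallyEdgeConnectedN (G : SimpleGraph ℕ) (k : ℕ) : Prop :=
  ¬ ∃ A : Finset (Sym2 ℕ), ↑A ⊆ G.edgeSet ∧ A.card < k ∧
    ∃ u u' : ℕ, (∃ c : (G.deleteEdges ↑A).Walk u u, c.IsCycle) ∧
      (∃ c : (G.deleteEdges ↑A).Walk u' u', c.IsCycle) ∧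
      ¬ (G.deleteEdges ↑A).Reachable u u'

/-- The result of splitting the cyclic edge cut `S`: delete the edges of `S` and
join a new vertex `v` to `v1,v2,v3` and a new vertex `w` to `w1,w2,w3`. -/
def splitGraph (G : SimpleGraph ℕ) (S : Set (Sym2 ℕ)) (v w v1 v2 v3 w1 w2 w3 : ℕ) :
    SimpleGraph ℕ :=
  (G.deleteEdges S) ⊔
    SimpleGraph.fromEdgeSet {s(v, v1), s(v, v2), s(v, v3), s(w, w1), s(w, w2), s(w, w3)}

/-- The hypotheses of the splitting operation: `{{v1,w1},{v2,w2},{v3,w3}}` is a cyclic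
edge cut of size three of `G`, with `v1,v2,v3` in one component and `w1,w2,w3` in the
other component after deletion, and `v`, `w` are new vertices. -/
structure IsSplitting (G : SimpleGraph ℕ) (v w v1 v2 v3 w1 w2 w3 : ℕ) : Prop where
  sub : ({s(v1, w1), s(v2, w2), s(v3, w3)} : Set (Sym2 ℕ)) ⊆ G.edgeSet
  card3 : ({s(v1, w1), s(v2, w2), s(v3, w3)} : Finset (Sym2 ℕ)).card = 3
  cyc1 : ∃ u : ℕ,
    (G.deleteEdges {s(v1, w1), s(v2, w2), s(v3, w3)}).Reachable v1 u ∧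
    ∃ c : (G.deleteEdges {s(v1, w1), s(v2, w2), s(v3, w3)}).Walk u u, c.IsCycle
  cyc2 : ∃ u : ℕ,
    (G.deleteEdges {s(v1, w1), s(v2, w2), s(v3, w3)}).Reachable w1 u ∧
    ∃ c : (G.deleteEdges {s(v1, w1), s(v2, w2), s(v3, w3)}).Walk u u, c.IsCycle
  reachv2 : (G.deleteEdges {s(v1, w1), s(v2, w2), s(v3, w3)}).Reachable v1 v2
  reachv3 : (G.deleteEdges {s(v1, w1), s(v2, w2), s(v3, w3)}).Reachable v1 v3
  reachw2 : (G.deleteEdges {s(v1, w1), s(v2, w2), s(v3, w3)}).Reachable w1 w2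
  reachw3 : (G.deleteEdges {s(v1, w1), s(v2, w2), s(v3, w3)}).Reachable w1 w3
  sep : ¬ (G.deleteEdges {s(v1, w1), s(v2, w2), s(v3, w3)}).Reachable v1 w1
  freshv : ∀ y, ¬ G.Adj v y
  freshw : ∀ y, ¬ G.Adj w y
  vw : v ≠ w

/-- The connected component of `a` in `G`, as a graph on `ℕ`. -/
def componentOf (G : SimpleGraph ℕ) (a : ℕ) : SimpleGraph ℕ where
  Adj x y := G.Adj x y ∧ G.Reachable a x ∧ G.Reachable a y
  symm := ⟨fun _ _ h => ⟨h.1.symm, h.2.2, h.2.1⟩⟩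
  loopless := ⟨fun x h => G.loopless.irrefl x h.1⟩

/-- `IsC4CDecomp G l` : `l` is the C4C-decomposition of `G`, obtained by recursively
splitting cyclic edge cuts of size three until every component is `K4` or cyclically
4-edge connected. -/
inductive IsC4CDecomp : SimpleGraph ℕ → List (SimpleGraph ℕ) → Prop
  | leaf (G : SimpleGraph ℕ) :
      (IsK4Graph G ∨ CyclicallyEdgeConnectedN G 4) → IsC4CDecomp G [G]
  | split (G : SimpleGraph ℕ) (v w v1 v2 v3 w1 w2 w3 : ℕ)
      (l1 l2 : List (SimpleGraph ℕ)) :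
      IsSplitting G v w v1 v2 v3 w1 w2 w3 →
      IsC4CDecomp (componentOf
        (splitGraph G {s(v1, w1), s(v2, w2), s(v3, w3)} v w v1 v2 v3 w1 w2 w3) v) l1 →
      IsC4CDecomp (componentOf
        (splitGraph G {s(v1, w1), s(v2, w2), s(v3, w3)} v w v1 v2 v3 w1 w2 w3) w) l2 →
      IsC4CDecomp G (l1 ++ l2)

/-- The planar triangulation `T_n`: a cycle `v_1 … v_{2n}` (on vertices `1,…,2n`),
two hubs `2n+1`, `2n+2` joined to all cycle vertices, and the three extra vertices
`w_1 = 2n+3` (joined to `1, 2, 2n+1`), `w_2 = 2n+4` (joined to `1, 2, 2n+3`) and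
`w_3 = 2n+5` (joined to `2, 3, 2n+1`). -/
def Tn (n : ℕ) : SimpleGraph ℕ :=
  SimpleGraph.fromEdgeSet (
    {e | ∃ i, 1 ≤ i ∧ i < 2 * n ∧ e = s(i, i + 1)} ∪ {s(2 * n, 1)} ∪
    {e | ∃ i, 1 ≤ i ∧ i ≤ 2 * n ∧ (e = s(2 * n + 1, i) ∨ e = s(2 * n + 2, i))} ∪
    {s(2 * n + 3, 1), s(2 * n + 3, 2), s(2 * n + 3, 2 * n + 1),
     s(2 * n + 4, 1), s(2 * n + 4, 2), s(2 * n + 4, 2 * n + 3),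
     s(2 * n + 5, 2), s(2 * n + 5, 3), s(2 * n + 5, 2 * n + 1)})

namespace SimpleGraph.Iso

variable {V W : Type*} {G : SimpleGraph V} {G' : SimpleGraph W}

lemma ncard_neighborSet_apply (φ : G ≃g G') (v : V) :
    (G'.neighborSet (φ v)).ncard = (G.neighborSet v).ncard := by
  rw [← φ.image_neighborSet, Set.ncard_image_of_injective _ φ.injective]

lemma apply_eq_self_of_ncard_neighborSet_unique (φ : G ≃g G) {v : V}
    (h : ∀ w, (G.neighborSet w).ncard = (G.neighborSet v).ncard → w = v) : φ v = v :=
  h _ (φ.ncard_neighborSet_apply v)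

lemma apply_eq_self_of_adj_of_ncard_unique (φ : G ≃g G) {v w : V} (hv : φ v = v)
    (hvw : G.Adj v w)
    (h : ∀ u, G.Adj v u → (G.neighborSet u).ncard = (G.neighborSet w).ncard → u = w) :
    φ w = w :=
  h _ (hv ▸ φ.map_adj_iff.mpr hvw) (φ.ncard_neighborSet_apply w)

lemma apply_eq_self_of_adj_of_forall_ne (φ : G ≃g G) {v w : V} (hv : φ v = v)
    (hvw : G.Adj v w) (h : ∀ u, G.Adj v u → u ≠ w → φ u = u) : φ w = w := by
  by_contra hne
  exact hne (φ.injective (h _ (hv ▸ φ.map_adj_iff.mpr hvw) hne))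

end SimpleGraph.Iso

section Tn

variable {n : ℕ}

lemma Tn_neighborSet_one (hn : 1 ≤ n) :
    (Tn n).neighborSet 1 = ↑({2, 2*n, 2*n+1, 2*n+2, 2*n+3, 2*n+4} : Finset ℕ) := by
  ext b
  simp only [mem_neighborSet, Tn, fromEdgeSet_adj, Set.mem_union, Set.mem_ofPred_eq,
    Set.mem_insert_iff, Set.mem_singleton_iff, Sym2.eq_iff, and_or_left, or_and_right, exists_or,
    existsAndEq, true_and, Finset.coe_insert, Finset.coe_singleton]
  grind (splits := 40)

lemma Tn_neighborSet_two (hn : 1 ≤ n) :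
    (Tn n).neighborSet 2 = ↑({1, 3, 2*n+1, 2*n+2, 2*n+3, 2*n+4, 2*n+5} : Finset ℕ) := by
  ext b
  simp only [mem_neighborSet, Tn, fromEdgeSet_adj, Set.mem_union, Set.mem_ofPred_eq,
    Set.mem_insert_iff, Set.mem_singleton_iff, Sym2.eq_iff, and_or_left, or_and_right, exists_or,
    existsAndEq, true_and, Finset.coe_insert, Finset.coe_singleton]
  grind (splits := 40)

lemma Tn_neighborSet_three (hn : 2 ≤ n) :
    (Tn n).neighborSet 3 = ↑({2, 4, 2*n+1, 2*n+2, 2*n+5} : Finset ℕ) := by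
  ext b
  simp only [mem_neighborSet, Tn, fromEdgeSet_adj, Set.mem_union, Set.mem_ofPred_eq,
    Set.mem_insert_iff, Set.mem_singleton_iff, Sym2.eq_iff, and_or_left, or_and_right, exists_or,
    existsAndEq, true_and, Finset.coe_insert, Finset.coe_singleton]
  grind (splits := 40)

lemma Tn_neighborSet_of_lt {k : ℕ} (hk : 4 ≤ k) (hk' : k < 2 * n) :
    (Tn n).neighborSet k = ↑({k - 1, k + 1, 2*n+1, 2*n+2} : Finset ℕ) := by
  ext b
  simp only [mem_neighborSet, Tn, fromEdgeSet_adj, Set.mem_union, Set.mem_ofPred_eq,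
    Set.mem_insert_iff, Set.mem_singleton_iff, Sym2.eq_iff, and_or_left, or_and_right, exists_or,
    existsAndEq, true_and, Finset.coe_insert, Finset.coe_singleton]
  grind (splits := 40)

lemma Tn_neighborSet_two_mul (hn : 2 ≤ n) :
    (Tn n).neighborSet (2*n) = ↑({2*n-1, 1, 2*n+1, 2*n+2} : Finset ℕ) := by
  ext b
  simp only [mem_neighborSet, Tn, fromEdgeSet_adj, Set.mem_union, Set.mem_ofPred_eq,
    Set.mem_insert_iff, Set.mem_singleton_iff, Sym2.eq_iff, and_or_left, or_and_right, exists_or,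
    existsAndEq, true_and, Finset.coe_insert, Finset.coe_singleton]
  grind (splits := 40)

lemma Tn_neighborSet_two_mul_add_one (hn : 1 ≤ n) :
    (Tn n).neighborSet (2*n+1) = ↑(insert (2*n+3) (insert (2*n+5) (Finset.Icc 1 (2*n)))) := by
  ext b
  simp only [mem_neighborSet, Tn, fromEdgeSet_adj, Set.mem_union, Set.mem_ofPred_eq,
    Set.mem_insert_iff, Set.mem_singleton_iff, Sym2.eq_iff, and_or_left, or_and_right, exists_or,
    existsAndEq, true_and, Finset.coe_insert, Finset.coe_Icc, Set.mem_Icc]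
  grind (splits := 40)

lemma Tn_neighborSet_two_mul_add_two (hn : 1 ≤ n) :
    (Tn n).neighborSet (2*n+2) = ↑(Finset.Icc 1 (2*n)) := by
  ext b
  simp only [mem_neighborSet, Tn, fromEdgeSet_adj, Set.mem_union, Set.mem_ofPred_eq,
    Set.mem_insert_iff, Set.mem_singleton_iff, Sym2.eq_iff, and_or_left, or_and_right, exists_or,
    existsAndEq, true_and, Finset.coe_Icc, Set.mem_Icc]
  grind (splits := 40)

lemma Tn_neighborSet_two_mul_add_three (hn : 1 ≤ n) :
    (Tn n).neighborSet (2*n+3) = ↑({1, 2, 2*n+1, 2*n+4} : Finset ℕ) := by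
  ext b
  simp only [mem_neighborSet, Tn, fromEdgeSet_adj, Set.mem_union, Set.mem_ofPred_eq,
    Set.mem_insert_iff, Set.mem_singleton_iff, Sym2.eq_iff, and_or_left, or_and_right, exists_or,
    existsAndEq, true_and, Finset.coe_insert, Finset.coe_singleton]
  grind (splits := 40)

lemma Tn_neighborSet_two_mul_add_four :
    (Tn n).neighborSet (2*n+4) = ↑({1, 2, 2*n+3} : Finset ℕ) := by
  ext b
  simp only [mem_neighborSet, Tn, fromEdgeSet_adj, Set.mem_union, Set.mem_ofPred_eq,
    Set.mem_insert_iff, Set.mem_singleton_iff, Sym2.eq_iff, and_or_left, or_and_right, exists_or,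
    existsAndEq, true_and, Finset.coe_insert, Finset.coe_singleton]
  grind (splits := 40)

lemma Tn_neighborSet_two_mul_add_five :
    (Tn n).neighborSet (2*n+5) = ↑({2, 3, 2*n+1} : Finset ℕ) := by
  ext b
  simp only [mem_neighborSet, Tn, fromEdgeSet_adj, Set.mem_union, Set.mem_ofPred_eq,
    Set.mem_insert_iff, Set.mem_singleton_iff, Sym2.eq_iff, and_or_left, or_and_right, exists_or,
    existsAndEq, true_and, Finset.coe_insert, Finset.coe_singleton]
  grind (splits := 40)

lemma Tn_neighborSet_eq_empty (hn : 1 ≤ n) {a : ℕ} (ha : a = 0 ∨ 2*n+5 < a) :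
    (Tn n).neighborSet a = ∅ := by
  ext b
  simp only [mem_neighborSet, Tn, fromEdgeSet_adj, Set.mem_union, Set.mem_ofPred_eq,
    Set.mem_insert_iff, Set.mem_singleton_iff, Sym2.eq_iff, and_or_left, or_and_right, exists_or,
    existsAndEq, true_and, Set.mem_empty_iff_false, iff_false]
  grind (splits := 40)

lemma Tn_ncard_neighborSet_cases (hn : 2 ≤ n) {w d : ℕ}
    (hd : ((Tn n).neighborSet w).ncard = d) :
    w = 1 ∧ d = 6 ∨ w = 2 ∧ d = 7 ∨ w = 3 ∧ d = 5 ∨ (4 ≤ w ∧ w ≤ 2*n ∨ w = 2*n+3) ∧ d = 4 ∨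
      w = 2*n+1 ∧ d = 2*n+2 ∨ w = 2*n+2 ∧ d = 2*n ∨ (w = 2*n+4 ∨ w = 2*n+5) ∧ d = 3 ∨
      (w = 0 ∨ 2*n+5 < w) ∧ d = 0 := by
  obtain rfl | rfl | rfl | hw | rfl | rfl | rfl | rfl | rfl | rfl | hw :
      w = 1 ∨ w = 2 ∨ w = 3 ∨ (4 ≤ w ∧ w < 2*n) ∨ w = 2*n ∨ w = 2*n+1 ∨ w = 2*n+2 ∨
        w = 2*n+3 ∨ w = 2*n+4 ∨ w = 2*n+5 ∨ (w = 0 ∨ 2*n+5 < w) := by omega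
  all_goals first
    | rw [Tn_neighborSet_one (by omega)] at hd
    | rw [Tn_neighborSet_two (by omega)] at hd
    | rw [Tn_neighborSet_three hn] at hd
    | rw [Tn_neighborSet_two_mul hn] at hd
    | rw [Tn_neighborSet_two_mul_add_one (by omega)] at hd
    | rw [Tn_neighborSet_two_mul_add_two (by omega)] at hd
    | rw [Tn_neighborSet_two_mul_add_three (by omega)] at hd
    | rw [Tn_neighborSet_two_mul_add_four] at hd
    | rw [Tn_neighborSet_two_mul_add_five] at hd
    | rw [Tn_neighborSet_of_lt hw.1 hw.2] at hd
    | rw [Tn_neighborSet_eq_empty (by omega) hw] at hd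
  all_goals
    simp (disch := (simp only [Finset.mem_insert, Finset.mem_singleton, Finset.mem_Icc]; omega))
      only [Set.ncard_coe_finset, Finset.card_insert_of_notMem, Finset.card_singleton,
        Nat.card_Icc, Set.ncard_empty] at hd
    grind

lemma Tn_support_subset (hn : 1 ≤ n) : (Tn n).support ⊆ Set.Icc 1 (2*n+5) := by
  intro a ha'
  obtain ⟨b, hab⟩ := (Tn n).mem_support.mp ha'
  by_contra ha
  rw [← mem_neighborSet, Tn_neighborSet_eq_empty hn (by simp only [Set.mem_Icc] at ha; omega)]
    at hab
  exact hab

lemma Tn_adj_succ {k : ℕ} (hk : 1 ≤ k) (hk' : k < 2*n) : (Tn n).Adj k (k+1) := by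
  rw [Tn, fromEdgeSet_adj]
  exact ⟨Or.inl (Or.inl (Or.inl ⟨k, hk, hk', rfl⟩)), by omega⟩

lemma Tn_adj_of_two_le_of_lt {k u : ℕ} (hk : 2 ≤ k) (hk' : k < 2*n)
    (h : (Tn n).Adj k u) : u + 1 = k ∨ u = k + 1 ∨ 2*n < u ∧ u ≤ 2*n+5 := by
  rw [← mem_neighborSet] at h
  obtain rfl | rfl | hk4 : k = 2 ∨ k = 3 ∨ 4 ≤ k := by omega
  all_goals first
    | rw [Tn_neighborSet_two (by omega)] at h
    | rw [Tn_neighborSet_three (by omega)] at h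
    | rw [Tn_neighborSet_of_lt hk4 hk'] at h
  all_goals
    simp only [Finset.coe_insert, Finset.coe_singleton, Set.mem_insert_iff,
      Set.mem_singleton_iff] at h
    omega

lemma Tn_eq_of_ncard_neighborSet_eq (hn : 4 ≤ n) {v w : ℕ}
    (hv : v = 1 ∨ v = 2 ∨ v = 3 ∨ v = 2*n+1 ∨ v = 2*n+2)
    (h : ((Tn n).neighborSet w).ncard = ((Tn n).neighborSet v).ncard) : w = v := by
  have hw := Tn_ncard_neighborSet_cases (by omega) h
  have hv' := Tn_ncard_neighborSet_cases (n := n) (w := v) (by omega) rfl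
  omega

lemma Tn_eq_of_adj_three_of_ncard_eq (hn : 2 ≤ n) {u : ℕ} (hu : (Tn n).Adj 3 u)
    (h : ((Tn n).neighborSet u).ncard = ((Tn n).neighborSet (2*n+5)).ncard) : u = 2*n+5 := by
  rw [← mem_neighborSet, Tn_neighborSet_three hn] at hu
  simp only [Finset.coe_insert, Finset.coe_singleton, Set.mem_insert_iff,
    Set.mem_singleton_iff] at hu
  have hu' := Tn_ncard_neighborSet_cases hn h
  have hw := Tn_ncard_neighborSet_cases (n := n) (w := 2*n+5) hn rfl
  omega

lemma Tn_eq_of_adj_one_of_ncard_eq (hn : 2 ≤ n) {u : ℕ} (hu : (Tn n).Adj 1 u)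
    (h : ((Tn n).neighborSet u).ncard = ((Tn n).neighborSet (2*n+4)).ncard) : u = 2*n+4 := by
  rw [← mem_neighborSet, Tn_neighborSet_one (by omega)] at hu
  simp only [Finset.coe_insert, Finset.coe_singleton, Set.mem_insert_iff,
    Set.mem_singleton_iff] at hu
  have hu' := Tn_ncard_neighborSet_cases hn h
  have hw := Tn_ncard_neighborSet_cases (n := n) (w := 2*n+4) hn rfl
  omega

lemma Tn_iso_apply_eq_self_of_degree (hn : 4 ≤ n) (φ : Tn n ≃g Tn n) {v : ℕ}
    (hv : v = 1 ∨ v = 2 ∨ v = 3 ∨ v = 2*n+1 ∨ v = 2*n+2) : φ v = v :=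
  φ.apply_eq_self_of_ncard_neighborSet_unique fun _ => Tn_eq_of_ncard_neighborSet_eq hn hv

lemma Tn_iso_apply_eq_self_of_two_mul_lt (hn : 4 ≤ n) (φ : Tn n ≃g Tn n) {u : ℕ}
    (hu : 2*n < u) (hu' : u ≤ 2*n+5) : φ u = u := by
  have hn₂ : 2 ≤ n := by omega
  have fix_w₃ : φ (2*n+5) = 2*n+5 :=
    φ.apply_eq_self_of_adj_of_ncard_unique (Tn_iso_apply_eq_self_of_degree hn φ (by omega))
      (by rw [← mem_neighborSet, Tn_neighborSet_three hn₂]; simp)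
      fun _ => Tn_eq_of_adj_three_of_ncard_eq hn₂
  have fix_w₂ : φ (2*n+4) = 2*n+4 :=
    φ.apply_eq_self_of_adj_of_ncard_unique (Tn_iso_apply_eq_self_of_degree hn φ (by omega))
      (by rw [← mem_neighborSet, Tn_neighborSet_one (by omega)]; simp)
      fun _ => Tn_eq_of_adj_one_of_ncard_eq hn₂
  have fix_w₁ : φ (2*n+3) = 2*n+3 :=
    φ.apply_eq_self_of_adj_of_forall_ne fix_w₂
      (by rw [← mem_neighborSet, Tn_neighborSet_two_mul_add_four]; simp)
      fun v hv hne => by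
        rw [← mem_neighborSet, Tn_neighborSet_two_mul_add_four] at hv
        simp only [Finset.coe_insert, Finset.coe_singleton, Set.mem_insert_iff,
          Set.mem_singleton_iff] at hv
        obtain rfl | rfl | rfl := hv
        exacts [Tn_iso_apply_eq_self_of_degree hn φ (by omega),
          Tn_iso_apply_eq_self_of_degree hn φ (by omega), absurd rfl hne]
  obtain rfl | rfl | rfl | rfl | rfl :
      u = 2*n+1 ∨ u = 2*n+2 ∨ u = 2*n+3 ∨ u = 2*n+4 ∨ u = 2*n+5 := by omega
  exacts [Tn_iso_apply_eq_self_of_degree hn φ (by omega),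
    Tn_iso_apply_eq_self_of_degree hn φ (by omega), fix_w₁, fix_w₂, fix_w₃]

lemma Tn_iso_apply_eq_self_of_le (φ : Tn n ≃g Tn n) (h₁ : φ 1 = 1) (h₂ : φ 2 = 2)
    (hhub : ∀ u, 2*n < u → u ≤ 2*n+5 → φ u = u) {k : ℕ} (hk : 1 ≤ k) (hk' : k ≤ 2*n) :
    φ k = k := by
  suffices h : ∀ m, 2 ≤ m → m ≤ 2*n → ∀ u, 1 ≤ u → u ≤ m → φ u = u from
    h (2*n) (by omega) le_rfl k hk hk'
  intro m hm hm'
  induction m, hm using Nat.le_induction with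
  | base =>
    intro u hu hu'
    obtain rfl | rfl : u = 1 ∨ u = 2 := by omega
    exacts [h₁, h₂]
  | succ m hm ih =>
    have ih := ih (by omega)
    have hsucc : φ (m+1) = m+1 :=
      φ.apply_eq_self_of_adj_of_forall_ne (ih m (by omega) le_rfl) (Tn_adj_succ (by omega) hm')
        fun u hu hne => by
          rcases Tn_adj_of_two_le_of_lt hm hm' hu with h | h | h
          exacts [ih u (by omega) (by omega), absurd h hne, hhub u h.1 h.2]
    intro u hu hu'
    obtain hu' | rfl : u ≤ m ∨ u = m + 1 := by omega
    exacts [ih u hu hu', hsucc]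

end Tn

/-- For `n ≥ 4`, the planar triangulation `T_n` (on `2n + 5` vertices)
has trivial automorphism group: every automorphism fixes each vertex. -/
theorem stmt_15 (n : ℕ) (hn : 4 ≤ n) (φ : Tn n ≃g Tn n) :
    ∀ x ∈ (Tn n).support, φ x = x := by
  intro x hx
  obtain ⟨hx₁, hx₂⟩ := Tn_support_subset (by omega) hx
  obtain hx' | hx' : x ≤ 2*n ∨ 2*n < x := by omega
  · exact Tn_iso_apply_eq_self_of_le φ (Tn_iso_apply_eq_self_of_degree hn φ (by omega))
      (Tn_iso_apply_eq_self_of_degree hn φ (by omega))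
      (fun _ => Tn_iso_apply_eq_self_of_two_mul_lt hn φ) hx₁ hx'
  · exact Tn_iso_apply_eq_self_of_two_mul_lt hn φ hx' hx₂
end

section
/- For n ≥ 4 and j ∈ {0,1}, the planar triangulation T_n on 2n+5 vertices contains exactly C(2n, n-j) subgraphs isomorphic to K_{2,n-j} whose partition set of size two is {v_{2n+1}, v_{2n+2}}, and in all these subgraphs the two vertices of the partition set of size two are not adjacent in T_n. -/
open SimpleGraph

theorem Finset.setOf_card_eq_forall_mem_eq_coe_powersetCard {α : Type*} (s : Finset α)
    {p : α → Prop} (hp : ∀ x, p x ↔ x ∈ s) (k : ℕ) :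
    {W : Finset α | W.card = k ∧ ∀ x ∈ W, p x} = ↑(s.powersetCard k) := by
  ext W
  simp only [Set.mem_ofPred_eq, Finset.mem_coe, Finset.mem_powersetCard, hp]
  exact and_comm

theorem Tn_adj_hub_of_mem {n x : ℕ} (hx : x ∈ Finset.Icc 1 (2 * n)) :
    (Tn n).Adj (2 * n + 1) x ∧ (Tn n).Adj (2 * n + 2) x := by
  obtain ⟨h1, h2⟩ := Finset.mem_Icc.mp hx
  simp only [Tn, SimpleGraph.fromEdgeSet_adj]
  exact ⟨⟨Or.inl (Or.inr ⟨x, h1, h2, Or.inl rfl⟩), by omega⟩,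
    ⟨Or.inl (Or.inr ⟨x, h1, h2, Or.inr rfl⟩), by omega⟩⟩

-- For `n = 0` the hub `2n+2` is the cycle vertex `2`, which `w_1, w_2, w_3` also see.
theorem Tn_adj_right_hub_iff {n x : ℕ} (hn : n ≠ 0) :
    (Tn n).Adj (2 * n + 2) x ↔ x ∈ Finset.Icc 1 (2 * n) := by
  refine ⟨fun h => ?_, fun hx => (Tn_adj_hub_of_mem hx).2⟩
  obtain ⟨h, hne⟩ := SimpleGraph.fromEdgeSet_adj _ |>.mp h
  simp only [Set.mem_union, Set.mem_ofPred_eq, Set.mem_insert_iff,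
    Set.mem_singleton_iff, Sym2.eq_iff, true_and] at h
  rw [Finset.mem_Icc]
  rcases h with (((⟨i, hi⟩ | h) | ⟨i, hi⟩) | h)
  all_goals omega

theorem Tn_adj_hubs_iff {n x : ℕ} (hn : n ≠ 0) :
    (Tn n).Adj (2 * n + 1) x ∧ (Tn n).Adj (2 * n + 2) x ↔ x ∈ Finset.Icc 1 (2 * n) :=
  ⟨fun h => (Tn_adj_right_hub_iff hn).mp h.2, Tn_adj_hub_of_mem⟩

theorem Tn_not_adj_hubs {n : ℕ} (hn : n ≠ 0) : ¬ (Tn n).Adj (2 * n + 1) (2 * n + 2) := fun h => by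
  have := Finset.mem_Icc.mp ((Tn_adj_right_hub_iff hn).mp h.symm)
  omega

theorem stmt_16_general (n : ℕ) (hn : 4 ≤ n) (j : ℕ) :
    ¬ (Tn n).Adj (2 * n + 1) (2 * n + 2) ∧
    {W : Finset ℕ | W.card = n - j ∧
        ∀ x ∈ W, (Tn n).Adj (2 * n + 1) x ∧ (Tn n).Adj (2 * n + 2) x}.ncard
      = Nat.choose (2 * n) (n - j) := by
  have hn0 : n ≠ 0 := by omega
  refine ⟨Tn_not_adj_hubs hn0, ?_⟩
  rw [Finset.setOf_card_eq_forall_mem_eq_coe_powersetCard _ (fun _ => Tn_adj_hubs_iff hn0),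
    Set.ncard_coe_finset, Finset.card_powersetCard, Nat.card_Icc, Nat.add_sub_cancel]

/-- For `n ≥ 4` and `j ∈ {0,1}`, the two hubs `2n+1` and `2n+2` of
`T_n` are non-adjacent, and `T_n` contains exactly `C(2n, n-j)` subgraphs isomorphic
to `K_{2,n-j}` with partition set of size two `{2n+1, 2n+2}` (each determined by an
`(n-j)`-element set of common neighbours of the two hubs). -/
theorem stmt_16 (n : ℕ) (hn : 4 ≤ n) (j : ℕ) (hj : j ≤ 1) :
    ¬ (Tn n).Adj (2 * n + 1) (2 * n + 2) ∧
    {W : Finset ℕ | W.card = n - j ∧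
        ∀ x ∈ W, (Tn n).Adj (2 * n + 1) x ∧ (Tn n).Adj (2 * n + 2) x}.ncard
      = Nat.choose (2 * n) (n - j) :=
  stmt_16_general n hn j
end
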